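/- For all n, the number of permutations of [n] avoiding both generalized patterns 1-23 and 13-2 equals the n-th Motzkin number M_n. -/

import Mathlib

def contains123 {n : ℕ} (π : Equiv.Perm (Fin n)) : Prop :=
  ∃ i j : ℕ, ∃ (_ : i < j) (hj : j + 1 < n),
    π ⟨i, by omega⟩ < π ⟨j, by omega⟩ ∧ π ⟨j, by omega⟩ < π ⟨j + 1, hj⟩

def contains13_2 {n : ℕ} (π : Equiv.Perm (Fin n)) : Prop :=
  ∃ i j : ℕ, ∃ (_ : i + 1 < j) (hj : j < n),
    π ⟨i, by omega⟩ < π ⟨j, hj⟩ ∧ π ⟨j, hj⟩ < π ⟨i + 1, by omega⟩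

def motzkin : ℕ → ℕ
  | 0 => 1
  | n + 1 => motzkin n + ∑ k ∈ (Finset.range n).attach,
      motzkin k * motzkin (n - 1 - k)
  decreasing_by
  · exact Nat.lt_succ_self n
  · have := Finset.mem_range.mp k.2; omega
  · have := Finset.mem_range.mp k.2; omega

/-!
In an avoider of length `n + 1` the minimum `0` sits in one of the last two positions, since the
two entries following it would form a `1-23` or a `13-2` with it. If `0` is last, the avoider is
`σ ⊖ 1` for an arbitrary avoider `σ` of length `n`. Otherwise it reads `w 0 x` with `x = k + 1`;
an entry of `w` below `x` directly followed by one above `x` would form a `13-2` with `x`, so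
`w = β α` where `α` takes the values `1, …, k` and `β` the values `k + 2, …, n`. Hence the avoider
is `β ⊖ ((α ⊖ 1) ⊕ 1)` for arbitrary avoiders `α`, `β` of lengths `k` and `n - 1 - k`. Both
constructions preserve avoidance, which gives the Motzkin recursion.
-/

namespace MotzkinAvoiders

open Equiv Set

-- Permutations are handled as sequences `ℕ → ℕ` (padded with `0` beyond their length), so that
-- all index arithmetic is left to `omega`.
def natVal {m : ℕ} (π : Perm (Fin m)) (i : ℕ) : ℕ :=
  if h : i < m then π ⟨i, h⟩ else 0

def IsPermSeq (m : ℕ) (f : ℕ → ℕ) : Prop :=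
  MapsTo f (Iio m) (Iio m) ∧ InjOn f (Iio m)

def Has123 (m : ℕ) (f : ℕ → ℕ) : Prop :=
  ∃ i j, i < j ∧ j + 1 < m ∧ f i < f j ∧ f j < f (j + 1)

def Has13_2 (m : ℕ) (f : ℕ → ℕ) : Prop :=
  ∃ i j, i + 1 < j ∧ j < m ∧ f i < f j ∧ f j < f (i + 1)

def Avoids (m : ℕ) (f : ℕ → ℕ) : Prop :=
  ¬ Has123 m f ∧ ¬ Has13_2 m f

abbrev Avoiders (m : ℕ) := {π : Perm (Fin m) // ¬ contains123 π ∧ ¬ contains13_2 π}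

section NatVal

variable {m : ℕ} (π : Perm (Fin m))

lemma natVal_of_lt {i : ℕ} (h : i < m) : natVal π i = π ⟨i, h⟩ := dif_pos h

lemma natVal_symm_apply (v : Fin m) : natVal π (π.symm v) = v := by
  simp [natVal_of_lt π (π.symm v).isLt]

lemma isPermSeq_natVal : IsPermSeq m (natVal π) := by
  refine ⟨fun i hi => ?_, fun i hi j hj h => ?_⟩
  · rw [mem_Iio] at hi ⊢
    rw [natVal_of_lt π hi]
    exact Fin.isLt _
  · rw [natVal_of_lt π hi, natVal_of_lt π hj] at h
    exact congrArg Fin.val (π.injective (Fin.ext h))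

lemma contains123_iff_has123 : contains123 π ↔ Has123 m (natVal π) := by
  constructor
  · rintro ⟨i, j, hij, hj, h₁, h₂⟩
    refine ⟨i, j, hij, hj, ?_, ?_⟩ <;> rwa [natVal_of_lt, natVal_of_lt]
  · rintro ⟨i, j, hij, hj, h₁, h₂⟩
    rw [natVal_of_lt π (by omega), natVal_of_lt π (by omega)] at h₁
    rw [natVal_of_lt π (by omega), natVal_of_lt π hj] at h₂
    exact ⟨i, j, hij, hj, h₁, h₂⟩

lemma contains13_2_iff_has13_2 : contains13_2 π ↔ Has13_2 m (natVal π) := by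
  constructor
  · rintro ⟨i, j, hij, hj, h₁, h₂⟩
    refine ⟨i, j, hij, hj, ?_, ?_⟩ <;> rwa [natVal_of_lt, natVal_of_lt]
  · rintro ⟨i, j, hij, hj, h₁, h₂⟩
    rw [natVal_of_lt π (by omega), natVal_of_lt π hj] at h₁
    rw [natVal_of_lt π hj, natVal_of_lt π (by omega)] at h₂
    exact ⟨i, j, hij, hj, h₁, h₂⟩

lemma avoids_natVal_iff :
    Avoids m (natVal π) ↔ ¬ contains123 π ∧ ¬ contains13_2 π := by
  rw [contains123_iff_has123, contains13_2_iff_has13_2, Avoids]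

variable {π} in
lemma perm_ext_natVal {σ : Perm (Fin m)} (h : ∀ i < m, natVal π i = natVal σ i) : π = σ := by
  ext i
  simpa [natVal_of_lt _ i.isLt] using h i i.isLt

end NatVal

section Constructions

variable {m n : ℕ} {f g : ℕ → ℕ}

lemma Avoids.congr (hf : Avoids m f) (h : ∀ i < m, f i = g i) : Avoids m g := by
  refine ⟨fun ⟨i, j, hij, hj, h₁, h₂⟩ => hf.1 ⟨i, j, hij, hj, ?_, ?_⟩,
    fun ⟨i, j, hij, hj, h₁, h₂⟩ => hf.2 ⟨i, j, hij, hj, ?_, ?_⟩⟩ <;>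
  rwa [h _ (by omega), h _ (by omega)]

lemma avoids_of_le_two (hm : m ≤ 2) : Avoids m f :=
  ⟨fun ⟨_, _, _, _, _⟩ => by omega, fun ⟨_, _, _, _, _⟩ => by omega⟩

noncomputable def permOfSeq (hf : IsPermSeq m f) : Perm (Fin m) :=
  Equiv.ofBijective (fun i => ⟨f i, hf.1 i.isLt⟩) <| Finite.injective_iff_bijective.mp
    fun a b h => Fin.ext (hf.2 a.isLt b.isLt (congrArg Fin.val h))

lemma natVal_permOfSeq (hf : IsPermSeq m f) {i : ℕ} (h : i < m) :
    natVal (permOfSeq hf) i = f i :=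
  natVal_of_lt _ h

noncomputable def Avoiders.ofSeq (hf : IsPermSeq m f) (havoid : Avoids m f) : Avoiders m :=
  ⟨permOfSeq hf, (avoids_natVal_iff _).1
    (havoid.congr fun _ hi => (natVal_permOfSeq hf hi).symm)⟩

lemma natVal_ofSeq (hf : IsPermSeq m f) (havoid : Avoids m f) {i : ℕ} (h : i < m) :
    natVal (Avoiders.ofSeq hf havoid).1 i = f i :=
  natVal_permOfSeq hf h

def window (off shift : ℕ) (f : ℕ → ℕ) (i : ℕ) : ℕ := f (off + i) - shift

lemma isPermSeq_window {off shift len : ℕ} (hf : InjOn f (Iio m)) (hm : off + len ≤ m)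
    (hw : ∀ i < len, shift ≤ f (off + i) ∧ f (off + i) < shift + len) :
    IsPermSeq len (window off shift f) := by
  refine ⟨fun i hi => ?_, fun i hi j hj h => ?_⟩
  · rw [mem_Iio] at hi ⊢
    have := hw i hi
    simp only [window]
    omega
  · rw [mem_Iio] at hi hj
    have := hw i hi
    have := hw j hj
    have := hf (show off + i < m by omega) (show off + j < m by omega)
      (by simp only [window] at h; omega)
    omega

lemma Avoids.window {off shift len : ℕ} (hf : Avoids m f) (hm : off + len ≤ m)
    (hw : ∀ i < len, shift ≤ f (off + i)) : Avoids len (window off shift f) := by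
  refine ⟨fun ⟨i, j, hij, hj, h₁, h₂⟩ => hf.1 ⟨off + i, off + j, ?_⟩,
    fun ⟨i, j, hij, hj, h₁, h₂⟩ => hf.2 ⟨off + i, off + j, ?_⟩⟩
  · have := hw i (by omega); have := hw j (by omega); have := hw (j + 1) hj
    simp only [MotzkinAvoiders.window, ← add_assoc] at h₁ h₂ this
    omega
  · have := hw i (by omega); have := hw j hj; have := hw (i + 1) (by omega)
    simp only [MotzkinAvoiders.window, ← add_assoc] at h₁ h₂ this
    omega

def skewSum (m n : ℕ) (f g : ℕ → ℕ) (i : ℕ) : ℕ := if i < m then f i + n else g (i - m)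

lemma skewSum_of_lt {i : ℕ} (h : i < m) : skewSum m n f g i = f i + n := if_pos h

lemma skewSum_of_le {i : ℕ} (h : m ≤ i) : skewSum m n f g i = g (i - m) := if_neg (by omega)

lemma IsPermSeq.skewSum (hf : IsPermSeq m f) (hg : IsPermSeq n g) :
    IsPermSeq (m + n) (skewSum m n f g) := by
  have hg' : ∀ i, m ≤ i → i < m + n → g (i - m) < n := fun i h₁ h₂ =>
    hg.1 (show i - m < n by omega)
  refine ⟨fun i (hi : i < m + n) => ?_, fun i (hi : i < m + n) j (hj : j < m + n) h => ?_⟩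
  · rcases lt_or_ge i m with him | him
    · have : f i < m := hf.1 him
      rw [mem_Iio, skewSum_of_lt him]; omega
    · rw [mem_Iio, skewSum_of_le him]; have := hg' i him hi; omega
  · rcases lt_or_ge i m with him | him <;> rcases lt_or_ge j m with hjm | hjm
    · rw [skewSum_of_lt him, skewSum_of_lt hjm] at h
      exact hf.2 him hjm (by omega)
    · rw [skewSum_of_lt him, skewSum_of_le hjm] at h; have := hg' j hjm hj; omega
    · rw [skewSum_of_le him, skewSum_of_lt hjm] at h; have := hg' i him hi; omega
    · rw [skewSum_of_le him, skewSum_of_le hjm] at h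
      have := hg.2 (show i - m < n by omega) (show j - m < n by omega) h
      omega

lemma Has123.of_skewSum (hg : MapsTo g (Iio n) (Iio n)) (h : Has123 (m + n) (skewSum m n f g)) :
    Has123 m f ∨ Has123 n g := by
  obtain ⟨i, j, hij, hj, h₁, h₂⟩ := h
  rcases lt_or_ge (j + 1) m with hjm | hjm
  · rw [skewSum_of_lt (by omega), skewSum_of_lt (by omega)] at h₁
    rw [skewSum_of_lt (by omega), skewSum_of_lt hjm] at h₂
    exact .inl ⟨i, j, hij, hjm, by omega, by omega⟩
  have hgj₁ : g (j + 1 - m) < n := hg (show j + 1 - m < n by omega)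
  rw [skewSum_of_le hjm] at h₂
  have hjm' : m ≤ j := by
    by_contra! hlt
    rw [skewSum_of_lt hlt] at h₂
    omega
  have hgj : g (j - m) < n := hg (show j - m < n by omega)
  rw [skewSum_of_le hjm'] at h₁ h₂
  have him : m ≤ i := by
    by_contra! hlt
    rw [skewSum_of_lt hlt] at h₁
    omega
  rw [skewSum_of_le him] at h₁
  rw [show j + 1 - m = j - m + 1 by omega] at h₂
  exact .inr ⟨i - m, j - m, by omega, by omega, h₁, h₂⟩

lemma Has13_2.of_skewSum (hg : MapsTo g (Iio n) (Iio n))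
    (h : Has13_2 (m + n) (skewSum m n f g)) : Has13_2 m f ∨ Has13_2 n g := by
  obtain ⟨i, j, hij, hj, h₁, h₂⟩ := h
  rcases lt_or_ge j m with hjm | hjm
  · rw [skewSum_of_lt (by omega), skewSum_of_lt hjm] at h₁
    rw [skewSum_of_lt hjm, skewSum_of_lt (by omega)] at h₂
    exact .inl ⟨i, j, hij, hjm, by omega, by omega⟩
  have hgj : g (j - m) < n := hg (show j - m < n by omega)
  rw [skewSum_of_le hjm] at h₁ h₂
  have him : m ≤ i := by
    by_contra! hlt
    rw [skewSum_of_lt hlt] at h₁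
    omega
  have hgi₁ : g (i + 1 - m) < n := hg (show i + 1 - m < n by omega)
  rw [skewSum_of_le him] at h₁
  rw [skewSum_of_le (by omega), show i + 1 - m = i - m + 1 by omega] at h₂
  exact .inr ⟨i - m, j - m, by omega, by omega, h₁, h₂⟩

lemma Avoids.skewSum (hf : Avoids m f) (hg : Avoids n g) (hgn : MapsTo g (Iio n) (Iio n)) :
    Avoids (m + n) (skewSum m n f g) :=
  ⟨fun h => (h.of_skewSum hgn).elim hf.1 hg.1, fun h => (h.of_skewSum hgn).elim hf.2 hg.2⟩

def snoc (m : ℕ) (f : ℕ → ℕ) (v i : ℕ) : ℕ := if i < m then f i else v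

lemma snoc_of_lt {v i : ℕ} (h : i < m) : snoc m f v i = f i := if_pos h

lemma snoc_self {v : ℕ} : snoc m f v m = v := if_neg (lt_irrefl m)

lemma IsPermSeq.snoc (hf : IsPermSeq m f) : IsPermSeq (m + 1) (snoc m f m) := by
  refine ⟨fun i (hi : i < m + 1) => ?_, fun i (hi : i < m + 1) j (hj : j < m + 1) h => ?_⟩
  · rcases lt_or_ge i m with him | him
    · have : f i < m := hf.1 him
      rw [mem_Iio, snoc_of_lt him]; omega
    · rw [mem_Iio, show i = m by omega, snoc_self]; omega
  · rcases lt_or_ge i m with him | him <;> rcases lt_or_ge j m with hjm | hjm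
    · rw [snoc_of_lt him, snoc_of_lt hjm] at h
      exact hf.2 him hjm h
    · have : f i < m := hf.1 him
      rw [snoc_of_lt him, show j = m by omega, snoc_self] at h; omega
    · have : f j < m := hf.1 hjm
      rw [snoc_of_lt hjm, show i = m by omega, snoc_self] at h; omega
    · omega

lemma Has123.of_snoc {v : ℕ} (hlast : ∀ i < m, f (m - 1) ≤ f i)
    (h : Has123 (m + 1) (snoc m f v)) : Has123 m f := by
  obtain ⟨i, j, hij, hj, h₁, h₂⟩ := h
  rw [snoc_of_lt (by omega), snoc_of_lt (by omega)] at h₁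
  have hjm : j + 1 < m := by
    by_contra! hge
    have := hlast i (by omega)
    rw [show j = m - 1 by omega] at h₁
    omega
  rw [snoc_of_lt (by omega), snoc_of_lt hjm] at h₂
  exact ⟨i, j, hij, hjm, h₁, h₂⟩

lemma Has13_2.of_snoc {v : ℕ} (hv : ∀ i < m, f i < v) (h : Has13_2 (m + 1) (snoc m f v)) :
    Has13_2 m f := by
  obtain ⟨i, j, hij, hj, h₁, h₂⟩ := h
  rw [snoc_of_lt (show i + 1 < m by omega)] at h₂
  have hjm : j < m := by
    by_contra! hge
    rw [show j = m by omega, snoc_self] at h₂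
    have := hv (i + 1) (by omega)
    omega
  rw [snoc_of_lt (by omega), snoc_of_lt hjm] at h₁
  rw [snoc_of_lt hjm] at h₂
  exact ⟨i, j, hij, hjm, h₁, h₂⟩

lemma Avoids.snoc {v : ℕ} (hf : Avoids m f) (hv : ∀ i < m, f i < v)
    (hlast : ∀ i < m, f (m - 1) ≤ f i) : Avoids (m + 1) (snoc m f v) :=
  ⟨fun h => hf.1 (h.of_snoc hlast), fun h => hf.2 (h.of_snoc hv)⟩

lemma isPermSeq_point : IsPermSeq 1 fun _ => 0 :=
  ⟨fun _ _ => Nat.one_pos, fun i (hi : i < 1) j (hj : j < 1) _ => by omega⟩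

end Constructions

section Blocks

variable {n k : ℕ} {a b : ℕ → ℕ}

def lastMinSeq (n : ℕ) (a : ℕ → ℕ) : ℕ → ℕ := skewSum n 1 a fun _ => 0

-- The word `b a 0 (k + 1)` with `a` shifted up by `1` and `b` by `k + 2`.
def splitSeq (n k : ℕ) (a b : ℕ → ℕ) : ℕ → ℕ :=
  skewSum (n - 1 - k) (k + 2) b (snoc (k + 1) (lastMinSeq k a) (k + 1))

lemma lastMinSeq_of_lt {i : ℕ} (h : i < n) : lastMinSeq n a i = a i + 1 := skewSum_of_lt h

lemma lastMinSeq_self : lastMinSeq n a n = 0 := skewSum_of_le le_rfl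

lemma IsPermSeq.lastMinSeq (ha : IsPermSeq n a) : IsPermSeq (n + 1) (lastMinSeq n a) :=
  ha.skewSum isPermSeq_point

lemma Avoids.lastMinSeq (ha : Avoids n a) : Avoids (n + 1) (lastMinSeq n a) :=
  ha.skewSum (avoids_of_le_two (by norm_num)) isPermSeq_point.1

lemma IsPermSeq.splitSeq (hk : k < n) (ha : IsPermSeq k a) (hb : IsPermSeq (n - 1 - k) b) :
    IsPermSeq (n + 1) (splitSeq n k a b) := by
  have := hb.skewSum ha.lastMinSeq.snoc
  rwa [show n - 1 - k + (k + 1 + 1) = n + 1 by omega] at this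

lemma Avoids.splitSeq (hk : k < n) (ha : IsPermSeq k a) (ha' : Avoids k a)
    (hb : Avoids (n - 1 - k) b) : Avoids (n + 1) (splitSeq n k a b) := by
  have hsnoc := ha'.lastMinSeq.snoc (v := k + 1) (fun i hi => ha.lastMinSeq.1 hi) fun i _ => by
    rw [Nat.add_sub_cancel, lastMinSeq_self]
    exact Nat.zero_le _
  have := hb.skewSum hsnoc ha.lastMinSeq.snoc.1
  rwa [show n - 1 - k + (k + 1 + 1) = n + 1 by omega] at this

end Blocks

lemma Avoiders.avoids {m : ℕ} (π : Avoiders m) : Avoids m (natVal π.1) :=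
  (avoids_natVal_iff π.1).2 π.2

section Glue

variable {n k : ℕ}

noncomputable def lastMinPerm (σ : Avoiders n) : Avoiders (n + 1) :=
  .ofSeq (isPermSeq_natVal σ.1).lastMinSeq σ.avoids.lastMinSeq

noncomputable def splitPerm (hk : k < n) (α : Avoiders k) (β : Avoiders (n - 1 - k)) :
    Avoiders (n + 1) :=
  .ofSeq ((isPermSeq_natVal α.1).splitSeq hk (isPermSeq_natVal β.1))
    (α.avoids.splitSeq hk (isPermSeq_natVal α.1) β.avoids)

lemma natVal_lastMinPerm_of_lt (σ : Avoiders n) {i : ℕ} (h : i < n) :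
    natVal (lastMinPerm σ).1 i = natVal σ.1 i + 1 := by
  rw [lastMinPerm, natVal_ofSeq _ _ (by omega), lastMinSeq_of_lt h]

lemma natVal_lastMinPerm_self (σ : Avoiders n) : natVal (lastMinPerm σ).1 n = 0 := by
  rw [lastMinPerm, natVal_ofSeq _ _ (by omega), lastMinSeq_self]

variable (α : Avoiders k) (β : Avoiders (n - 1 - k))

lemma natVal_splitPerm_of_lt (hk : k < n) {i : ℕ} (h : i < n - 1 - k) :
    natVal (splitPerm hk α β).1 i = natVal β.1 i + (k + 2) := by
  rw [splitPerm, natVal_ofSeq _ _ (by omega), splitSeq, skewSum_of_lt h]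

lemma natVal_splitPerm_sub_add (hk : k < n) {i : ℕ} (h : i < k) :
    natVal (splitPerm hk α β).1 (n - 1 - k + i) = natVal α.1 i + 1 := by
  rw [splitPerm, natVal_ofSeq _ _ (by omega), splitSeq, skewSum_of_le (by omega),
    Nat.add_sub_cancel_left, snoc_of_lt (by omega), lastMinSeq_of_lt h]

lemma natVal_splitPerm_pred (hk : k < n) : natVal (splitPerm hk α β).1 (n - 1) = 0 := by
  rw [splitPerm, natVal_ofSeq _ _ (by omega), splitSeq, skewSum_of_le (by omega),
    show n - 1 - (n - 1 - k) = k by omega, snoc_of_lt (by omega), lastMinSeq_self]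

lemma natVal_splitPerm_self (hk : k < n) : natVal (splitPerm hk α β).1 n = k + 1 := by
  rw [splitPerm, natVal_ofSeq _ _ (by omega), splitSeq, skewSum_of_le (by omega),
    show n - (n - 1 - k) = k + 1 by omega, snoc_self]

lemma splitPerm_eq (hk : k < n) {π : Avoiders (n + 1)}
    (hβ : ∀ i < n - 1 - k, natVal π.1 i = natVal β.1 i + (k + 2))
    (hα : ∀ i < k, natVal π.1 (n - 1 - k + i) = natVal α.1 i + 1)
    (h0 : natVal π.1 (n - 1) = 0) (hx : natVal π.1 n = k + 1) : splitPerm hk α β = π := by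
  refine Subtype.ext (perm_ext_natVal fun i hi => ?_)
  obtain hi | ⟨j, hj, rfl⟩ | rfl | rfl :
      i < n - 1 - k ∨ (∃ j < k, i = n - 1 - k + j) ∨ i = n - 1 ∨ i = n := by
    rcases lt_or_ge i (n - 1) with h | h
    · exact (lt_or_ge i (n - 1 - k)).imp id fun _ => .inl ⟨i - (n - 1 - k), by omega, by omega⟩
    · omega
  · rw [natVal_splitPerm_of_lt _ _ hk hi, hβ i hi]
  · rw [natVal_splitPerm_sub_add _ _ hk hj, hα j hj]
  · rw [natVal_splitPerm_pred _ _ hk, h0]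
  · rw [natVal_splitPerm_self _ _ hk, hx]

end Glue

section Structure

variable {m n k p : ℕ} {f : ℕ → ℕ}

lemma Avoids.le_add_two_of_eq_zero (hf : Avoids m f) (hinj : InjOn f (Iio m)) (hp : p < m)
    (h0 : f p = 0) : m ≤ p + 2 := by
  by_contra! hlt
  have hpos : ∀ i < m, i ≠ p → 0 < f i := fun i hi hip =>
    Nat.pos_of_ne_zero fun h => hip (hinj hi hp (h.trans h0.symm))
  have h₁ := hpos (p + 1) (by omega) (by omega)
  have h₂ := hpos (p + 2) hlt (by omega)
  rcases lt_or_gt_of_ne (hinj.ne (show p + 1 < m by omega) (show p + 2 < m from hlt) (by omega))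
    with h | h
  · exact hf.1 ⟨p, p + 1, by omega, hlt, by omega, h⟩
  · exact hf.2 ⟨p, p + 2, by omega, hlt, by omega, h⟩

lemma exists_threshold {N : ℕ} {P : ℕ → Prop} (hP : ∀ j, j + 1 < N → P j → P (j + 1)) :
    ∃ c ≤ N, ∀ j < N, (P j ↔ c ≤ j) := by
  induction N with
  | zero => exact ⟨0, le_rfl, fun j hj => absurd hj (Nat.not_lt_zero j)⟩
  | succ N ih =>
    obtain ⟨c, hcN, hc⟩ := ih fun j hj => hP j (by omega)
    by_cases hN : P N
    · refine ⟨c, by omega, fun j hj => ?_⟩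
      rcases Nat.lt_succ_iff_lt_or_eq.mp hj with hj | rfl
      · exact hc j hj
      · exact iff_of_true hN hcN
    · have hcN : c = N := by
        by_contra hne
        have := hP (N - 1) (by omega) ((hc (N - 1) (by omega)).2 (by omega))
        rw [Nat.sub_add_cancel (by omega)] at this
        exact hN this
      refine ⟨N + 1, le_rfl, fun j hj => ?_⟩
      rcases Nat.lt_succ_iff_lt_or_eq.mp hj with hj | rfl
      · rw [hc j hj]; omega
      · exact iff_of_false hN (by omega)

lemma sub_le_sub_of_injOn {a b c d : ℕ} (hf : ∀ i, a ≤ i → i < b → c ≤ f i ∧ f i < d)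
    (hinj : InjOn f (Ico a b)) : b - a ≤ d - c := by
  simpa using Finset.card_le_card_of_injOn f (s := Finset.Ico a b) (t := Finset.Ico c d)
    (fun i hi => by simpa using hf i (Finset.mem_Ico.1 hi).1 (Finset.mem_Ico.1 hi).2)
    (by simpa using hinj)

lemma Avoids.le_iff_of_eq_zero_of_eq_succ (hf : IsPermSeq (n + 1) f) (hav : Avoids (n + 1) f)
    (h0 : f (n - 1) = 0) (hx : f n = k + 1) :
    ∀ j < n - 1, (f j ≤ k ↔ n - 1 - k ≤ j) := by
  have hne : ∀ i < n + 1, ∀ j < n + 1, i ≠ j → f i ≠ f j := fun i hi j hj => hf.2.ne hi hj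
  have hlt : ∀ i < n + 1, f i < n + 1 := fun i hi => hf.1 hi
  -- An ascent across the value `k + 1` would form a `13-2` with the final entry `k + 1`.
  have step : ∀ j, j + 1 < n - 1 → f j ≤ k → f (j + 1) ≤ k := by
    intro j hj hjk
    by_contra! hgt
    have := hne (j + 1) (by omega) n (by omega) (by omega)
    exact hav.2 ⟨j, n, by omega, by omega, by omega, by omega⟩
  obtain ⟨c, hc, hcj⟩ := exists_threshold step
  -- The two blocks inject into `{1, …, k}` and `{k + 2, …, n}`, which pins down `c`.
  have hlow : n - 1 - c ≤ k + 1 - 1 := sub_le_sub_of_injOn (fun i hci hin => by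
      have := (hcj i hin).2 hci
      have := hne i (by omega) (n - 1) (by omega) (by omega)
      omega) (hf.2.mono fun i hi => by simp only [mem_Ico, mem_Iio] at hi ⊢; omega)
  have hhigh : c - 0 ≤ n + 1 - (k + 2) := sub_le_sub_of_injOn (fun i _ hic => by
      have := mt (hcj i (by omega)).1 (by omega)
      have := hne i (by omega) n (by omega) (by omega)
      have := hlt i (by omega)
      omega) (hf.2.mono fun i hi => by simp only [mem_Ico, mem_Iio] at hi ⊢; omega)
  rwa [show c = n - 1 - k by omega] at hcj

end Structure

section Bijection

variable {n : ℕ}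

noncomputable def glue (n : ℕ) :
    Avoiders n ⊕ (Σ k : {k // k ∈ Finset.range n}, Avoiders k × Avoiders (n - 1 - k)) →
      Avoiders (n + 1) :=
  Sum.elim lastMinPerm fun x => splitPerm (Finset.mem_range.1 x.1.2) x.2.1 x.2.2

lemma glue_injective (n : ℕ) : Function.Injective (glue n) := by
  rintro (σ | ⟨⟨k, hk⟩, α, β⟩) (σ' | ⟨⟨k', hk'⟩, α', β'⟩) h <;>
    have hval := fun i => congrArg (fun π : Avoiders (n + 1) => natVal π.1 i) h <;>
    simp only [glue, Sum.elim_inl, Sum.elim_inr] at hval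
  · obtain rfl : σ = σ' := Subtype.ext <| perm_ext_natVal fun i hi => by
      simpa [natVal_lastMinPerm_of_lt _ hi] using hval i
    rfl
  · have := hval n
    rw [natVal_lastMinPerm_self, natVal_splitPerm_self] at this
    omega
  · have := hval n
    rw [natVal_lastMinPerm_self, natVal_splitPerm_self] at this
    omega
  · rw [Finset.mem_range] at hk hk'
    obtain rfl : k = k' := by
      have := hval n
      rwa [natVal_splitPerm_self, natVal_splitPerm_self, Nat.add_right_cancel_iff] at this
    obtain rfl : α = α' := Subtype.ext <| perm_ext_natVal fun i hi => by
      simpa [natVal_splitPerm_sub_add _ _ hk hi] using hval (n - 1 - k + i)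
    obtain rfl : β = β' := Subtype.ext <| perm_ext_natVal fun i hi => by
      simpa [natVal_splitPerm_of_lt _ _ hk hi] using hval i
    rfl

lemma exists_lastMinPerm_eq (π : Avoiders (n + 1)) (h0 : natVal π.1 n = 0) :
    ∃ σ : Avoiders n, lastMinPerm σ = π := by
  have hf := isPermSeq_natVal π.1
  have hw : ∀ i < n, 1 ≤ natVal π.1 (0 + i) ∧ natVal π.1 (0 + i) < 1 + n := fun i hi => by
    have := hf.2.ne (show i < n + 1 by omega) (show n < n + 1 by omega) (by omega)
    have : natVal π.1 i < n + 1 := hf.1 (show i < n + 1 by omega)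
    rw [zero_add]
    omega
  refine ⟨.ofSeq (isPermSeq_window hf.2 (by omega) hw)
    (π.avoids.window (by omega) fun i hi => (hw i hi).1),
    Subtype.ext (perm_ext_natVal fun i hi => ?_)⟩
  rcases Nat.lt_succ_iff_lt_or_eq.mp hi with hi | rfl
  · rw [natVal_lastMinPerm_of_lt _ hi, natVal_ofSeq _ _ hi, window]
    have := hw i hi
    rw [zero_add] at this ⊢
    omega
  · rw [natVal_lastMinPerm_self, h0]

lemma exists_splitPerm_eq (π : Avoiders (n + 1)) (hn : 1 ≤ n) (h0 : natVal π.1 (n - 1) = 0) :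
    ∃ k, ∃ hk : k < n, ∃ α β, splitPerm hk α β = π := by
  have hf := isPermSeq_natVal π.1
  have hne : ∀ i < n + 1, ∀ j < n + 1, i ≠ j → natVal π.1 i ≠ natVal π.1 j :=
    fun i hi j hj => hf.2.ne hi hj
  obtain ⟨k, hx⟩ : ∃ k, natVal π.1 n = k + 1 :=
    Nat.exists_eq_succ_of_ne_zero (h0 ▸ hne n (by omega) (n - 1) (by omega) (by omega))
  have hk : k < n := by
    have : natVal π.1 n < n + 1 := hf.1 (show n < n + 1 by omega)
    omega
  have hblock := π.avoids.le_iff_of_eq_zero_of_eq_succ hf h0 hx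
  have hα : ∀ i < k, 1 ≤ natVal π.1 (n - 1 - k + i) ∧ natVal π.1 (n - 1 - k + i) < 1 + k :=
    fun i hi => by
      have := (hblock (n - 1 - k + i) (by omega)).2 (by omega)
      have := hne (n - 1 - k + i) (by omega) (n - 1) (by omega) (by omega)
      omega
  have hβ : ∀ i < n - 1 - k,
      k + 2 ≤ natVal π.1 (0 + i) ∧ natVal π.1 (0 + i) < k + 2 + (n - 1 - k) := fun i hi => by
    have := mt (hblock i (by omega)).1 (by omega)
    have := hne i (by omega) n (by omega) (by omega)
    have : natVal π.1 i < n + 1 := hf.1 (show i < n + 1 by omega)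
    rw [zero_add]
    omega
  refine ⟨k, hk, .ofSeq (isPermSeq_window hf.2 (by omega) hα)
    (π.avoids.window (by omega) fun i hi => (hα i hi).1),
    .ofSeq (isPermSeq_window hf.2 (by omega) hβ)
    (π.avoids.window (by omega) fun i hi => (hβ i hi).1),
    splitPerm_eq _ _ hk (fun i hi => ?_) (fun i hi => ?_) h0 hx⟩
  · rw [natVal_ofSeq _ _ hi, window]
    have := hβ i hi
    rw [zero_add] at this ⊢
    omega
  · rw [natVal_ofSeq _ _ hi, window]
    have := hα i hi
    omega

lemma glue_surjective (n : ℕ) : Function.Surjective (glue n) := by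
  intro π
  obtain ⟨p, hp, h0⟩ : ∃ p < n + 1, natVal π.1 p = 0 :=
    ⟨π.1.symm 0, (π.1.symm 0).isLt, by simpa using natVal_symm_apply π.1 0⟩
  have := π.avoids.le_add_two_of_eq_zero (isPermSeq_natVal π.1).2 hp h0
  obtain rfl | ⟨rfl, hn⟩ : p = n ∨ p = n - 1 ∧ 1 ≤ n := by omega
  · obtain ⟨σ, rfl⟩ := exists_lastMinPerm_eq π h0
    exact ⟨.inl σ, rfl⟩
  · obtain ⟨k, hk, α, β, rfl⟩ := exists_splitPerm_eq π hn h0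
    exact ⟨.inr ⟨⟨k, Finset.mem_range.2 hk⟩, α, β⟩, rfl⟩

end Bijection

lemma card_avoiders_zero : Nat.card (Avoiders 0) = 1 := by
  rw [Nat.card_congr (Equiv.subtypeUnivEquiv fun π =>
    (avoids_natVal_iff π).1 (avoids_of_le_two (by norm_num)))]
  simp

lemma card_avoiders_succ (n : ℕ) :
    Nat.card (Avoiders (n + 1)) = Nat.card (Avoiders n) +
      ∑ k ∈ (Finset.range n).attach, Nat.card (Avoiders k) * Nat.card (Avoiders (n - 1 - k)) := by
  rw [← Nat.card_congr (Equiv.ofBijective _ ⟨glue_injective n, glue_surjective n⟩),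
    Nat.card_sum, Nat.card_sigma, Finset.univ_eq_attach]
  simp only [Nat.card_prod]

end MotzkinAvoiders

theorem stmt11 (n : ℕ) :
    Nat.card {π : Equiv.Perm (Fin n) // ¬ contains123 π ∧ ¬ contains13_2 π} = motzkin n := by
  induction n using Nat.strong_induction_on with
  | _ n ih =>
    rcases n with _ | n
    · rw [motzkin, MotzkinAvoiders.card_avoiders_zero]
    · rw [motzkin, MotzkinAvoiders.card_avoiders_succ, ih n (by omega)]
      refine congrArg _ (Finset.sum_congr rfl fun k _ => ?_)
      have hk := Finset.mem_range.1 k.2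
      rw [ih k (by omega), ih (n - 1 - k) (by omega)]
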